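/- Bound on artifacts for equally spaced antennas: if θ_n = 2π(n−1)/N, then |(1/N) Σ_{n=1}^N e^{i x cos(θ_n−φ)} − J₀(x)| ≤ 2 Σ_{m=1}^∞ |J_{mN}(x)|, and in particular for fixed x this bound tends to 0 as N → ∞. -/

import Mathlib

open Complex Finset Filter

noncomputable def Jnat (n : ℕ) (x : ℝ) : ℝ :=
  ∑' m : ℕ, ((-1 : ℝ) ^ m / (m.factorial * (m + n).factorial)) * (x / 2) ^ (2 * m + n)

noncomputable def J (s : ℤ) (x : ℝ) : ℝ :=
  if 0 ≤ s then Jnat s.toNat x else (-1 : ℝ) ^ (-s).toNat * Jnat (-s).toNat x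

/-! Expanding `exp (i x cos α) = exp (i x e^{iα} / 2) * exp (i x e^{-iα} / 2)` as a product
of two exponential series and collecting the terms of frequency `s = a - b` gives the
Jacobi–Anger expansion `exp (i x cos α) = ∑_{s ∈ ℤ} i^s J_s(x) e^{isα}`, absolutely convergent.
Averaging over the angles `2πn/N` kills every frequency not divisible by `N`, so the average
minus `J_0(x)` is `∑_{k ≠ 0} i^{kN} J_{kN}(x) e^{-ikNφ}`, of norm at most
`2 ∑_{m ≥ 1} |J_{mN}(x)|`. The bound `|J_n(x)| ≤ (|x|/2)^n / n! * exp (x²/4)` makes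
`n ↦ |J_n(x)|` summable, and the sum over the multiples of `N` is at most the tail beyond `N`,
which tends to `0`. -/

theorem HasSum.norm_sub_apply_zero_le {E : Type*} [NormedAddCommGroup E] [CompleteSpace E]
    {f : ℤ → E} {a : E} (hf : HasSum f a) {u : ℕ → ℝ} (hu : Summable u)
    (hpos : ∀ m : ℕ, ‖f (m + 1)‖ ≤ u m) (hneg : ∀ m : ℕ, ‖f (-(m + 1))‖ ≤ u m) :
    ‖a - f 0‖ ≤ 2 * ∑' m, u m := by
  have hs₁ : Summable fun m : ℕ => f (m + 1) := .of_norm_bounded hu hpos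
  have hs₂ : Summable fun m : ℕ => f (-(m + 1)) := .of_norm_bounded hu hneg
  have hsplit : a = f 0 + ∑' m : ℕ, f (m + 1) + ∑' m : ℕ, f (-(m + 1)) := by
    refine hf.unique (HasSum.of_nat_of_neg_add_one ?_ hs₂.hasSum)
    exact HasSum.zero_add (f := fun n : ℕ => f n) (by exact_mod_cast hs₁.hasSum)
  rw [hsplit, add_assoc, add_sub_cancel_left, two_mul]
  exact (norm_add_le _ _).trans
    (add_le_add (tsum_of_norm_bounded hu.hasSum hpos) (tsum_of_norm_bounded hu.hasSum hneg))

theorem tendsto_tsum_succ_mul_atTop_zero {a : ℕ → ℝ} (ha : Summable a)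
    (ha0 : ∀ n, 0 ≤ a n) :
    Tendsto (fun N => ∑' m : ℕ, a ((m + 1) * N)) atTop (nhds 0) := by
  refine squeeze_zero' (.of_forall fun N => tsum_nonneg fun m => ha0 _) ?_
    (tendsto_sum_nat_add a)
  filter_upwards [eventually_ge_atTop 1] with N hN
  simpa [add_one_mul, Function.comp_def] using tsum_comp_le_tsum_of_inj
    ((summable_nat_add_iff N).mpr ha) (fun k => ha0 _) (mul_left_injective₀ (by omega : N ≠ 0))

lemma abs_Jnat_term_le (n m : ℕ) (x : ℝ) :
    |(-1 : ℝ) ^ m / (m.factorial * (m + n).factorial) * (x / 2) ^ (2 * m + n)|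
      ≤ (|x| / 2) ^ n / n.factorial * (((|x| / 2) ^ 2) ^ m / m.factorial) := by
  have hfac : (n.factorial * m.factorial : ℝ) ≤ m.factorial * (m + n).factorial := by
    rw [mul_comm]; gcongr; omega
  rw [abs_mul, abs_div, abs_pow, abs_neg, abs_one, one_pow, abs_pow, abs_div, abs_two,
    abs_of_pos (by positivity)]
  have hy : 0 ≤ |x| / 2 := by positivity
  generalize |x| / 2 = y at hy ⊢
  calc 1 / (m.factorial * (m + n).factorial : ℝ) * y ^ (2 * m + n)
      = y ^ (2 * m + n) / (m.factorial * (m + n).factorial) := by ring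
    _ ≤ y ^ (2 * m + n) / (n.factorial * m.factorial) := by gcongr
    _ = _ := by ring

lemma summable_Jnat_term (n : ℕ) (x : ℝ) :
    Summable fun m : ℕ =>
      (-1 : ℝ) ^ m / (m.factorial * (m + n).factorial) * (x / 2) ^ (2 * m + n) :=
  .of_norm_bounded ((Real.summable_pow_div_factorial _).mul_left _) (abs_Jnat_term_le n · x)

lemma abs_Jnat_le (n : ℕ) (x : ℝ) :
    |Jnat n x| ≤ (|x| / 2) ^ n / n.factorial * Real.exp ((|x| / 2) ^ 2) := by
  unfold Jnat
  exact tsum_of_norm_bounded (E := ℝ)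
    ((Real.exp_eq_exp_ℝ ▸ NormedSpace.expSeries_div_hasSum_exp _).mul_left _)
    (abs_Jnat_term_le n · x)

lemma summable_abs_Jnat (x : ℝ) : Summable fun n : ℕ => |Jnat n x| :=
  .of_nonneg_of_le (fun _ => abs_nonneg _) (abs_Jnat_le · x)
    ((Real.summable_pow_div_factorial _).mul_right _)

lemma J_natCast (n : ℕ) (x : ℝ) : J n x = Jnat n x := by
  simp [J]

lemma I_zpow_mul_J (s : ℤ) (x : ℝ) : I ^ s * J s x = I ^ s.natAbs * Jnat s.natAbs x := by
  obtain ⟨n, rfl | rfl⟩ := Int.eq_nat_or_neg s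
  · simp [J]
  · rcases n.eq_zero_or_pos with rfl | hn
    · simp [J]
    have hI : I ^ (-n : ℤ) * (-1) ^ n = I ^ n := by
      rw [zpow_neg, zpow_natCast, ← I_sq, ← pow_mul, mul_comm 2 n, pow_mul, sq,
        inv_mul_cancel_left₀ (pow_ne_zero n I_ne_zero)]
    simp only [J, Left.nonneg_neg_iff, Int.natCast_nonpos_iff, neg_neg, Int.toNat_natCast,
      Int.natAbs_neg, Int.natAbs_natCast]
    rw [if_neg (by omega)]
    push_cast
    rw [← mul_assoc, hI]

lemma hasSum_I_pow_mul_Jnat (n : ℕ) (x : ℝ) :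
    HasSum (fun l : ℕ => (I * x / 2) ^ (2 * l + n) / ((l + n).factorial * l.factorial))
      (I ^ n * Jnat n x) := by
  refine ((hasSum_ofReal.mpr (summable_Jnat_term n x).hasSum).mul_left (I ^ n)).congr_fun
    fun l => ?_
  rw [mul_div_assoc, mul_pow, pow_add I, pow_mul, I_sq]
  push_cast
  ring

lemma hasSum_exp_mul_exp (z w : ℂ) :
    HasSum (fun p : ℕ × ℕ => z ^ p.1 / p.1.factorial * (w ^ p.2 / p.2.factorial))
      (exp z * exp w) := by
  have hexp (u : ℂ) : HasSum (fun n : ℕ => u ^ n / n.factorial) (exp u) := by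
    rw [exp_eq_exp_ℂ]; exact NormedSpace.expSeries_div_hasSum_exp u
  have hnorm (u : ℂ) : Summable fun n : ℕ => ‖u ^ n / n.factorial‖ := by
    refine (Real.summable_pow_div_factorial ‖u‖).congr fun n => ?_
    rw [norm_div, norm_pow, Complex.norm_natCast]
  rw [← (hexp z).tsum_eq, ← (hexp w).tsum_eq,
    tsum_mul_tsum_of_summable_norm (hnorm z) (hnorm w)]
  exact (summable_mul_of_summable_norm (hnorm z) (hnorm w)).hasSum

lemma exp_I_mul_cos (x α : ℝ) :
    exp (I * x * Real.cos α)
      = exp (I * x / 2 * exp (I * α)) * exp (I * x / 2 * exp (-(I * α))) := by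
  rw [← exp_add, ofReal_cos, Complex.cos]
  ring_nf

def diffMinEquiv : ℕ × ℕ ≃ ℤ × ℕ where
  toFun p := ((p.1 : ℤ) - p.2, min p.1 p.2)
  invFun q := (q.2 + q.1.toNat, q.2 + (-q.1).toNat)
  left_inv p := by ext <;> simp <;> omega
  right_inv q := by ext <;> simp; omega

lemma factorial_add_toNat_mul_factorial_add_toNat_neg (s : ℤ) (l : ℕ) :
    (l + s.toNat).factorial * (l + (-s).toNat).factorial
      = (l + s.natAbs).factorial * l.factorial := by
  obtain ⟨n, rfl | rfl⟩ := Int.eq_nat_or_neg s <;> simp [mul_comm]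

theorem hasSum_jacobiAnger (x α : ℝ) :
    HasSum (fun s : ℤ => I ^ s * J s x * exp (I * s * α)) (exp (I * x * Real.cos α)) := by
  set z : ℂ := I * x / 2
  have hdouble : HasSum (fun p : ℕ × ℕ =>
      z ^ (p.1 + p.2) / (p.1.factorial * p.2.factorial) * exp (I * ((p.1 : ℤ) - p.2 : ℤ) * α))
      (exp (I * x * Real.cos α)) := by
    rw [exp_I_mul_cos]
    convert hasSum_exp_mul_exp (z * exp (I * α)) (z * exp (-(I * α))) using 2 with p
    have hphase : exp (I * ((p.1 : ℤ) - p.2 : ℤ) * α)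
        = exp (p.1 * (I * α)) * exp (p.2 * -(I * α)) := by
      rw [← exp_add]; push_cast; ring_nf
    rw [hphase, mul_pow, mul_pow, exp_nat_mul, exp_nat_mul, pow_add]
    ring
  rw [← diffMinEquiv.symm.hasSum_iff] at hdouble
  refine hdouble.prod_fiberwise fun s => ?_
  rw [I_zpow_mul_J]
  refine ((hasSum_I_pow_mul_Jnat s.natAbs x).mul_right (exp (I * s * α))).congr_fun
    fun l => ?_
  simp only [Function.comp_apply, diffMinEquiv, Equiv.coe_fn_symm_mk]
  rw [show l + s.toNat + (l + (-s).toNat) = 2 * l + s.natAbs by omega,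
    show ((l + s.toNat : ℕ) : ℤ) - (l + (-s).toNat : ℕ) = s by omega, ← Nat.cast_mul, factorial_add_toNat_mul_factorial_add_toNat_neg, Nat.cast_mul]

lemma norm_I_zpow_mul_J_mul_exp (s : ℤ) (x t : ℝ) :
    ‖I ^ s * J s x * exp (-(I * s * t))‖ = |Jnat s.natAbs x| := by
  rw [I_zpow_mul_J, norm_mul, norm_mul, norm_pow, norm_I, one_pow, one_mul, norm_real,
    Real.norm_eq_abs, norm_exp]
  simp

theorem sum_exp_I_mul_two_pi_div (s : ℤ) {N : ℕ} (hN : N ≠ 0) :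
    ∑ n : Fin N, exp (I * s * (2 * Real.pi * (n : ℕ) / N))
      = if (N : ℤ) ∣ s then (N : ℂ) else 0 := by
  set ζ := exp (2 * Real.pi * I / N)
  have hζ : IsPrimitiveRoot ζ N := Complex.isPrimitiveRoot_exp N hN
  have hterm (n : ℕ) : exp (I * s * (2 * Real.pi * n / N)) = (ζ ^ s) ^ n := by
    rw [← exp_int_mul, ← exp_nat_mul]; congr 1; ring
  rw [Finset.sum_congr rfl fun (n : Fin N) _ => hterm n,
    Fin.sum_univ_eq_sum_range (fun n => (ζ ^ s) ^ n)]
  split_ifs with hs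
  · simp [(hζ.zpow_eq_one_iff_dvd s).mpr hs]
  · have hpow : (ζ ^ s) ^ N = 1 := by
      rw [← zpow_natCast, ← zpow_mul, mul_comm s, zpow_mul, zpow_natCast, hζ.pow_eq_one,
        one_zpow]
    rw [geom_sum_eq ((hζ.zpow_eq_one_iff_dvd s).not.mpr hs), hpow, sub_self, zero_div]

theorem hasSum_average_exp_I_mul_cos (x φ : ℝ) {N : ℕ} (hN : N ≠ 0) :
    HasSum (fun k : ℤ => I ^ (k * N) * J (k * N) x * exp (-(I * (k * N : ℤ) * φ)))
      (1 / N * ∑ n : Fin N, exp (I * x * Real.cos (2 * Real.pi * (n : ℕ) / N - φ))) := by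
  have h := (hasSum_sum (s := Finset.univ) fun (n : Fin N) _ =>
    hasSum_jacobiAnger x (2 * Real.pi * (n : ℕ) / N - φ)).mul_left (1 / (N : ℂ))
  have hterm (s : ℤ) : 1 / N * ∑ n : Fin N,
      I ^ s * J s x * exp (I * s * (2 * Real.pi * (n : ℕ) / N - φ : ℝ))
      = if (N : ℤ) ∣ s then I ^ s * J s x * exp (-(I * s * φ)) else 0 := by
    have hsplit (n : Fin N) : exp (I * s * (2 * Real.pi * (n : ℕ) / N - φ : ℝ))
        = exp (-(I * s * φ)) * exp (I * s * (2 * Real.pi * (n : ℕ) / N)) := by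
      rw [← exp_add]; push_cast; ring_nf
    simp_rw [hsplit, ← mul_assoc, ← Finset.mul_sum, sum_exp_I_mul_two_pi_div s hN]
    split_ifs
    · field_simp
    · simp
  simp_rw [hterm] at h
  rw [← (mul_left_injective₀ (Int.natCast_ne_zero.mpr hN)).hasSum_iff] at h
  · refine h.congr_fun fun k => ?_
    simp
  · rintro s hs
    rw [if_neg]
    rintro ⟨k, rfl⟩
    exact hs ⟨k, mul_comm _ _⟩

theorem artifact_bound_equally_spaced_general (x φ : ℝ) :
    (∀ N : ℕ, 1 ≤ N →
      ‖(1 / (N : ℂ)) * (∑ n : Fin N,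
          Complex.exp (Complex.I * (x : ℂ) *
            ((Real.cos (2 * Real.pi * ((n : ℕ) : ℝ) / (N : ℝ) - φ) : ℝ) : ℂ))) -
        (J 0 x : ℂ)‖ ≤ 2 * ∑' m : ℕ, |J (((m + 1) * N : ℕ) : ℤ) x|) ∧
    Tendsto (fun N : ℕ => 2 * ∑' m : ℕ, |J (((m + 1) * N : ℕ) : ℤ) x|)
      atTop (nhds 0) := by
  simp only [J_natCast]
  refine ⟨fun N hN => ?_, ?_⟩
  · have hN0 : N ≠ 0 := by omega
    have h := (hasSum_average_exp_I_mul_cos x φ hN0).norm_sub_apply_zero_le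
      (u := fun m => |Jnat ((m + 1) * N) x|)
      ((summable_abs_Jnat x).comp_injective fun a b hab => by
        simpa using mul_right_cancel₀ hN0 hab)
      (fun m => by rw [norm_I_zpow_mul_J_mul_exp, Int.natAbs_mul, Int.natAbs_natCast,
        show (m + 1 : ℤ).natAbs = m + 1 by omega])
      (fun m => by rw [norm_I_zpow_mul_J_mul_exp, Int.natAbs_mul, Int.natAbs_natCast,
        show (-(m + 1) : ℤ).natAbs = m + 1 by omega])
    simpa using h
  · simpa using ((tendsto_tsum_succ_mul_atTop_zero (summable_abs_Jnat x)
      fun n => abs_nonneg _).const_mul 2)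

/-- Bound on the artifact for equally spaced antennas `θ_n = 2π(n−1)/N`:
`|(1/N) Σ_n e^{ix cos(θ_n−φ)} − J₀(x)| ≤ 2 Σ_{m≥1} |J_{mN}(x)|`, and for fixed
`x` this bound tends to `0` as `N → ∞`. -/
theorem artifact_bound_equally_spaced (x φ : ℝ) (hx : 0 ≤ x) :
    (∀ N : ℕ, 1 ≤ N →
      ‖(1 / (N : ℂ)) * (∑ n : Fin N,
          Complex.exp (Complex.I * (x : ℂ) *
            ((Real.cos (2 * Real.pi * ((n : ℕ) : ℝ) / (N : ℝ) - φ) : ℝ) : ℂ))) -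
        (J 0 x : ℂ)‖ ≤ 2 * ∑' m : ℕ, |J (((m + 1) * N : ℕ) : ℤ) x|) ∧
    Tendsto (fun N : ℕ => 2 * ∑' m : ℕ, |J (((m + 1) * N : ℕ) : ℤ) x|)
      atTop (nhds 0) :=
  artifact_bound_equally_spaced_general x φ
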